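/- arXiv:1009.4890 — 3 statements merged into one kernel-verified Lean document; each statement's English description precedes it below -/
import Mathlib

section
/- Let ≤ be any partial order on SYT_n that is stronger than the weak order (i.e., S ≤_weak T implies S ≤ T) and that restricts to segments (i.e., S ≤ T implies st(S_[i,j]) ≤ st(T_[i,j]) for all 1 ≤ i < j ≤ n). Then the map from (SYT_n, ≤) to the Boolean lattice (2^{[n−1]}, ⊆) sending each tableau T to its descent set Des(T) is order preserving. -/
/-! Basic combinatorial setup: permutations in one-line notation as lists of
natural numbers, RSK insertion, standard Young tableaux as lists of rows,
the right weak Bruhat order and the weak order on standard Young tableaux. -/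

/-- `w` is a permutation of `{1,…,n}` written in one-line notation. -/
def IsPermWord (n : ℕ) (w : List ℕ) : Prop := w.Perm (List.range' 1 n)

/-- The left inversion set of a word `w` in one-line notation:
pairs `(a,b)` with `a < b` such that `a` occurs to the right of `b` in `w`. -/
def InvL (w : List ℕ) : Set (ℕ × ℕ) :=
  {p | p.1 < p.2 ∧ p.1 ∈ w ∧ p.2 ∈ w ∧ w.idxOf p.2 < w.idxOf p.1}

/-- The right weak Bruhat order, characterized by inclusion of left inversion sets. -/
def wordLE (u w : List ℕ) : Prop := InvL u ⊆ InvL w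

/-- Schensted row insertion of a letter `x` into a row:
returns the new row together with the bumped letter, if any. -/
def insertRow : List ℕ → ℕ → List ℕ × Option ℕ
  | [], x => ([x], none)
  | y :: ys, x =>
    if x < y then (x :: ys, some y)
    else
      let p := insertRow ys x
      (y :: p.1, p.2)

/-- Schensted insertion of a letter into a tableau (given as its list of rows). -/
def insertTab : List (List ℕ) → ℕ → List (List ℕ)
  | [], x => [[x]]
  | r :: rs, x =>
    let p := insertRow r x
    match p.2 with
    | none => p.1 :: rs
    | some y => p.1 :: insertTab rs y

/-- The RSK insertion tableau `I(w)` of a word `w`. -/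
def RSK (w : List ℕ) : List (List ℕ) := w.foldl insertTab []

/-- The shape of a tableau: the list of row lengths. -/
def shape (t : List (List ℕ)) : List ℕ := t.map List.length

/-- `t` is a standard Young tableau with `n` cells: rows strictly increase,
columns strictly increase (in particular row lengths weakly decrease),
there are no empty rows, and the entries are exactly `1,…,n`. -/
def IsSYT (n : ℕ) (t : List (List ℕ)) : Prop :=
  (∀ r ∈ t, r.Pairwise (· < ·)) ∧
  t.Chain' (fun r₁ r₂ => r₂.length ≤ r₁.length ∧ ∀ c < r₂.length, r₁.getD c 0 < r₂.getD c 0) ∧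
  (∀ r ∈ t, r ≠ []) ∧
  t.flatten.Perm (List.range' 1 n)

/-- The (row) reading word of a tableau: rows read left to right,
starting from the bottom row. -/
def readWord (t : List (List ℕ)) : List ℕ := t.reverse.flatten

/-- `st(w_[i,j])`: the subword of `w` consisting of the letters in `[i,j]`,
standardized by subtracting `i-1` from each letter. -/
def restr (w : List ℕ) (i j : ℕ) : List ℕ :=
  (w.filter (fun x => decide (i ≤ x ∧ x ≤ j))).map (fun x => x - (i - 1))

/-- `st(T_[i,j])`: the (standardized) jeu-de-taquin rectification of the
restriction of `T` to the entries in `[i,j]`; the rectification of a skew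
tableau is computed as the insertion tableau of its reading word. -/
def restrTab (t : List (List ℕ)) (i j : ℕ) : List (List ℕ) :=
  RSK (restr (readWord t) i j)

/-- The relation generating the weak order on `SYT_n`:
`S ≤ T` if some `σ` in the Knuth class of `S` and some `τ` in the Knuth class
of `T` satisfy `σ ≤ τ` in the right weak Bruhat order. -/
def tabRel (n : ℕ) (S T : List (List ℕ)) : Prop :=
  ∃ σ τ : List ℕ, IsPermWord n σ ∧ IsPermWord n τ ∧ RSK σ = S ∧ RSK τ = T ∧ wordLE σ τ

/-- Melnikov's weak order on `SYT_n`: the transitive closure of `tabRel`. -/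
def tabLE (n : ℕ) (S T : List (List ℕ)) : Prop := Relation.TransGen (tabRel n) S T

/-- Strict weak order on `SYT_n`. -/
def tabLT (n : ℕ) (S T : List (List ℕ)) : Prop := tabLE n S T ∧ S ≠ T

/-- `S ⋖ T` in the weak order on `SYT_n`. -/
def tabCov (n : ℕ) (S T : List (List ℕ)) : Prop :=
  tabLT n S T ∧ ∀ Q, IsSYT n Q → ¬ (tabLT n S Q ∧ tabLT n Q T)

/-- `S ⋖ T` in the weak order within the subset of `SYT_n` cut out by `P`. -/
def tabCovIn (n : ℕ) (P : List (List ℕ) → Prop) (S T : List (List ℕ)) : Prop :=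
  tabLT n S T ∧ ∀ Q, IsSYT n Q → P Q → ¬ (tabLT n S Q ∧ tabLT n Q T)

/-- The left descent set of a permutation word. -/
def DesL (n : ℕ) (w : List ℕ) : Set ℕ :=
  {i | 1 ≤ i ∧ i < n ∧ w.idxOf (i + 1) < w.idxOf i}

/-- Index of the row of `t` containing the entry `v`. -/
def rowOf (t : List (List ℕ)) (v : ℕ) : ℕ := t.findIdx (fun r => decide (v ∈ r))

/-- The descent set of a standard Young tableau with `n` cells. -/
def DesT (n : ℕ) (t : List (List ℕ)) : Set ℕ :=
  {i | 1 ≤ i ∧ i < n ∧ rowOf t i < rowOf t (i + 1)}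

/-- The transpose (conjugate) of a tableau. -/
def transposeTab (t : List (List ℕ)) : List (List ℕ) :=
  (List.range (t.headD []).length).map (fun c => t.filterMap (fun r => r[c]?))

/-- Schützenberger's evacuation `T^evac`: the insertion tableau of the word
obtained from any word in the Knuth class of `T` (here, its reading word) by
reversing it and complementing each letter `x ↦ n+1-x`. -/
def evacTab (n : ℕ) (t : List (List ℕ)) : List (List ℕ) :=
  RSK (((readWord t).map (fun x => n + 1 - x)).reverse)

/-- Dominance order on partitions (as lists): `domLE l m` iff every partial
sum of `l` is at most the corresponding partial sum of `m`. -/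
def domLE (l m : List ℕ) : Prop := ∀ k, (l.take k).sum ≤ (m.take k).sum

/-- The inner subtableau `T_[1,k]` of a standard Young tableau:
the cells with entries `1,…,k`. -/
def innerTab (k : ℕ) (t : List (List ℕ)) : List (List ℕ) :=
  (t.map (fun r => r.filter (fun x => decide (x ≤ k)))).filter (fun r => !r.isEmpty)

/-- The inner tableau translation map `V_[R,R']`: in a tableau `t` with inner
tableau `R`, replace the subtableau `R` by the same-shape tableau `R'`. -/
def replaceInner (R R' t : List (List ℕ)) : List (List ℕ) :=
  (List.range t.length).map
    (fun r => R'.getD r [] ++ (t.getD r []).drop (R.getD r []).length)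

/-- Increase all entries of a tableau by `k`. -/
def shiftTab (k : ℕ) (t : List (List ℕ)) : List (List ℕ) := t.map (List.map (· + k))

/-- Concatenate two tableaux row by row. -/
def rowCat (S T : List (List ℕ)) : List (List ℕ) :=
  (List.range (max S.length T.length)).map (fun r => S.getD r [] ++ T.getD r [])

/-- `S \ T`: rows obtained by concatenating the rows of `T̄` (entries of `T`
shifted up by `k`) to the right of the rows of `S`, where `S ∈ SYT_k`. -/
def tabUnder (k : ℕ) (S T : List (List ℕ)) : List (List ℕ) := rowCat S (shiftTab k T)

/-- `S / T`: columns obtained by concatenating the columns of `T̄` (entries of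
`T` shifted up by `k`) under the columns of `S`, where `S ∈ SYT_k`. -/
def tabOver (k : ℕ) (S T : List (List ℕ)) : List (List ℕ) :=
  transposeTab (rowCat (transposeTab S) (transposeTab (shiftTab k T)))

/-- Reverse row bumping: replace the largest entry of the row smaller than `x`
by `x`, returning the new row and the entry that was bumped out upward. -/
def revBumpRow : List ℕ → ℕ → List ℕ × ℕ
  | [], x => ([], x)
  | [y], x => if y < x then ([x], y) else ([y], x)
  | y :: z :: ys, x =>
    if z < x then
      let p := revBumpRow (z :: ys) x
      (y :: p.1, p.2)
    else (x :: z :: ys, y)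

/-- Reverse insertion of a value `x` upward through a stack of rows
(listed top to bottom, processed bottom to top). -/
def revInsertAux : List (List ℕ) → ℕ → List (List ℕ) × ℕ
  | [], x => ([], x)
  | r :: rs, x =>
    let p := revInsertAux rs x
    let q := revBumpRow r p.2
    (q.1 :: p.1, q.2)

/-- `T↑A` and `η(T↑A)`: reverse RSK insertion applied to the tableau `t`
through the corner cell at the end of row `r`; returns the resulting tableau
together with the letter that leaves the tableau. -/
def revInsert (t : List (List ℕ)) (r : ℕ) : List (List ℕ) × ℕ :=
  let row := t.getD r []
  let p := revInsertAux (t.take r) (row.getLastD 0)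
  ((p.1 ++ [row.dropLast] ++ t.drop (r + 1)).filter (fun l => !l.isEmpty), p.2)

/-- A partition (as a list of row lengths) is a hook `(a,1,1,…,1)`. -/
def IsHook (sh : List ℕ) : Prop := ∀ a ∈ sh.tail, a = 1

/-! Restricting a standard tableau `T` to the segment `[i, i + 1]` leaves the two-letter word
`i, i+1` or `i+1, i` in the reading word, according as `i + 1` does not or does lie in a lower
row than `i`; so `st(T_[i,i+1])` is the row `12` when `i ∉ Des(T)` and the column `1/2` when
`i ∈ Des(T)`. The row lies below the column in the weak order (`12 ≤ 21` in the weak Bruhat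
order), so by antisymmetry an order that restricts to segments never sends a column below a row,
and a descent of `S` is a descent of every `T ≥ S`. -/

theorem List.Nodup.filter_eq_singleton {α : Type*} {p : α → Bool} {w : List α} {x : α}
    (hw : w.Nodup) (hx : x ∈ w) (hp : ∀ y ∈ w, p y = true ↔ y = x) : w.filter p = [x] :=
  List.perm_singleton.1 <| (List.perm_ext_iff_of_nodup (hw.filter p) (List.nodup_singleton x)).2
    fun y => by
      simp only [List.mem_filter, List.mem_singleton]
      exact ⟨fun h => (hp y h.1).1 h.2, fun h => h ▸ ⟨hx, (hp x hx).2 rfl⟩⟩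

theorem List.Pairwise.filter_eq_pair {α : Type*} [LinearOrder α] {p : α → Bool} {w : List α}
    {a b : α} (hw : w.Pairwise (· < ·)) (ha : a ∈ w) (hb : b ∈ w) (hab : a < b)
    (hp : ∀ y ∈ w, p y = true ↔ y = a ∨ y = b) : w.filter p = [a, b] := by
  have hsorted : [a, b].Pairwise (· < ·) := by simpa using hab
  refine List.Perm.eq_of_pairwise (fun x y _ _ hxy hyx => absurd hxy (lt_asymm hyx))
    (hw.filter p) hsorted ?_
  refine (List.perm_ext_iff_of_nodup (hw.nodup.filter p) hsorted.nodup).2 fun y => ?_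
  simp only [List.mem_filter, List.mem_cons, List.not_mem_nil, or_false]
  refine ⟨fun h => (hp y h.1).1 h.2, fun h => ?_⟩
  have hy : y ∈ w := h.elim (· ▸ ha) (· ▸ hb)
  exact ⟨hy, (hp y hy).2 h⟩

theorem readWord_cons (r : List ℕ) (L : List (List ℕ)) :
    readWord (r :: L) = readWord L ++ r := by
  simp [readWord]

theorem readWord_perm_flatten (L : List (List ℕ)) : (readWord L).Perm L.flatten :=
  (List.reverse_perm L).flatten

theorem rowOf_cons (r : List ℕ) (L : List (List ℕ)) (v : ℕ) :
    rowOf (r :: L) v = if v ∈ r then 0 else rowOf L v + 1 := by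
  by_cases h : v ∈ r <;> simp [rowOf, List.findIdx_cons, h]

theorem filter_readWord_eq_ite {a b : ℕ} {p : ℕ → Bool}
    (hp : ∀ x, p x = true ↔ x = a ∨ x = b) (hab : a < b) {L : List (List ℕ)}
    (hL : ∀ r ∈ L, r.Pairwise (· < ·)) (hnd : L.flatten.Nodup)
    (ha : a ∈ L.flatten) (hb : b ∈ L.flatten) :
    (readWord L).filter p = if rowOf L a < rowOf L b then [b, a] else [a, b] := by
  have honly_a {w : List ℕ} (hbw : b ∉ w) (y) (hy : y ∈ w) : p y = true ↔ y = a :=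
    (hp y).trans ⟨fun h => h.resolve_right (by rintro rfl; exact hbw hy), .inl⟩
  have honly_b {w : List ℕ} (haw : a ∉ w) (y) (hy : y ∈ w) : p y = true ↔ y = b :=
    (hp y).trans ⟨fun h => h.resolve_left (by rintro rfl; exact haw hy), .inr⟩
  have hnone {w : List ℕ} (haw : a ∉ w) (hbw : b ∉ w) : w.filter p = [] :=
    List.filter_eq_nil_iff.2 fun y hy hpy => by
      rcases (hp y).1 hpy with rfl | rfl
      exacts [haw hy, hbw hy]
  induction L with
  | nil => simp at ha
  | cons r L ih =>
    rw [List.flatten_cons, List.nodup_append] at hnd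
    obtain ⟨hr, hLnd, hdisj⟩ := hnd
    have hmem (x) : x ∈ readWord L ↔ x ∈ L.flatten := (readWord_perm_flatten L).mem_iff
    have hrnd := (readWord_perm_flatten L).nodup_iff.2 hLnd
    rw [readWord_cons, List.filter_append, rowOf_cons, rowOf_cons]
    by_cases har : a ∈ r <;> by_cases hbr : b ∈ r
    · have haL : a ∉ readWord L := fun h => hdisj a har a ((hmem a).1 h) rfl
      have hbL : b ∉ readWord L := fun h => hdisj b hbr b ((hmem b).1 h) rfl
      rw [hnone haL hbL, (hL r List.mem_cons_self).filter_eq_pair har hbr hab fun y _ => hp y]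
      simp [har, hbr]
    · have haL : a ∉ readWord L := fun h => hdisj a har a ((hmem a).1 h) rfl
      have hbL : b ∈ readWord L := (hmem b).2 (by simpa [hbr] using hb)
      rw [hrnd.filter_eq_singleton hbL (honly_b haL), hr.filter_eq_singleton har (honly_a hbr)]
      simp [har, hbr]
    · have haL : a ∈ readWord L := (hmem a).2 (by simpa [har] using ha)
      have hbL : b ∉ readWord L := fun h => hdisj b hbr b ((hmem b).1 h) rfl
      rw [hrnd.filter_eq_singleton haL (honly_a hbL), hr.filter_eq_singleton hbr (honly_b har)]
      simp [har, hbr]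
    · rw [ih (fun r' hr' => hL r' (.tail r hr')) hLnd (by simpa [har] using ha)
        (by simpa [hbr] using hb), hnone har hbr]
      simp [har, hbr]

namespace IsSYT

variable {n : ℕ} {t : List (List ℕ)}

theorem nodup_flatten (ht : IsSYT n t) : t.flatten.Nodup :=
  ht.2.2.2.nodup_iff.2 List.nodup_range'

theorem mem_flatten (ht : IsSYT n t) {v : ℕ} (h1 : 1 ≤ v) (hn : v ≤ n) : v ∈ t.flatten :=
  ht.2.2.2.mem_iff.2 (List.mem_range'_1.2 ⟨h1, by omega⟩)

theorem restrTab_succ (ht : IsSYT n t) {i : ℕ} (hi : 1 ≤ i) (hin : i < n) :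
    restrTab t i (i + 1) = if rowOf t i < rowOf t (i + 1) then [[1], [2]] else [[1, 2]] := by
  have hfilter := filter_readWord_eq_ite (p := fun x => decide (i ≤ x ∧ x ≤ i + 1))
    (fun x => by simp only [decide_eq_true_eq]; omega) (Nat.lt_succ_self i) ht.1
    ht.nodup_flatten (ht.mem_flatten hi hin.le) (ht.mem_flatten (by omega) hin)
  have h1 : i - (i - 1) = 1 := by omega
  have h2 : i + 1 - (i - 1) = 2 := by omega
  simp only [restrTab, restr, hfilter]
  split_ifs <;> simp only [List.map_cons, List.map_nil, h1, h2] <;> rfl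

end IsSYT

theorem isSYT_row_two : IsSYT 2 [[1, 2]] :=
  ⟨by decide, .singleton _, by simp, by decide⟩

theorem isSYT_column_two : IsSYT 2 [[1], [2]] :=
  ⟨by decide, List.isChain_pair.2 ⟨le_rfl, by decide⟩, by simp, by decide⟩

theorem tabLE_row_column_two : tabLE 2 [[1, 2]] [[1], [2]] := by
  refine .single ⟨[1, 2], [2, 1], List.Perm.refl _, List.Perm.swap 1 2 [], rfl, rfl, ?_⟩
  rintro ⟨x, y⟩ ⟨hxy, hx, hy, hidx⟩
  simp only [List.mem_cons, List.not_mem_nil, or_false] at hx hy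
  rcases hx with rfl | rfl <;> rcases hy with rfl | rfl <;> simp_all

theorem descent_map_order_preserving_general
    (le : ℕ → List (List ℕ) → List (List ℕ) → Prop)
    (hantisymm : ∀ n S T, IsSYT n S → IsSYT n T → le n S T → le n T S → S = T)
    (hstronger : ∀ n S T, IsSYT n S → IsSYT n T → tabLE n S T → le n S T)
    (hrestricts : ∀ n S T, IsSYT n S → IsSYT n T → le n S T →
      ∀ i j, 1 ≤ i → i < j → j ≤ n →
        le (j - i + 1) (restrTab S i j) (restrTab T i j)) :
    ∀ n S T, IsSYT n S → IsSYT n T → le n S T → DesT n S ⊆ DesT n T := by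
  rintro n S T hS hT hST i ⟨hi, hin, hdesS⟩
  refine ⟨hi, hin, by_contra fun hdesT => ?_⟩
  have hres := hrestricts n S T hS hT hST i (i + 1) hi i.lt_succ_self hin
  rw [Nat.add_sub_cancel_left, hS.restrTab_succ hi hin, if_pos hdesS,
    hT.restrTab_succ hi hin, if_neg hdesT] at hres
  have hrow_col := hstronger 2 _ _ isSYT_row_two isSYT_column_two tabLE_row_column_two
  exact absurd (hantisymm 2 _ _ isSYT_row_two isSYT_column_two hrow_col hres) (by decide)

/-- Any partial order on `SYT_n` stronger than the weak order which
restricts to segments makes the descent map `T ↦ Des(T)` into `(2^[n-1], ⊆)`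
order preserving. -/
theorem descent_map_order_preserving
    (le : ℕ → List (List ℕ) → List (List ℕ) → Prop)
    (hrefl : ∀ n S, IsSYT n S → le n S S)
    (htrans : ∀ n S T U, IsSYT n S → IsSYT n T → IsSYT n U →
      le n S T → le n T U → le n S U)
    (hantisymm : ∀ n S T, IsSYT n S → IsSYT n T → le n S T → le n T S → S = T)
    (hstronger : ∀ n S T, IsSYT n S → IsSYT n T → tabLE n S T → le n S T)
    (hrestricts : ∀ n S T, IsSYT n S → IsSYT n T → le n S T →
      ∀ i j, 1 ≤ i → i < j → j ≤ n →
        le (j - i + 1) (restrTab S i j) (restrTab T i j)) :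
    ∀ n S T, IsSYT n S → IsSYT n T → le n S T → DesT n S ⊆ DesT n T :=
  descent_map_order_preserving_general le hantisymm hstronger hrestricts
end

section
/- If S ≤_weak T in SYT_n, then T^t ≤_weak S^t, where T^t denotes the transpose (conjugate) tableau; that is, transposition is an order-reversing involution of the weak order on SYT_n. -/
/-!
Reversing a permutation word reverses the right weak order: for `a < b` in `w`, the pair
`(a, b)` is an inversion of the reversed word exactly when it is not an inversion of `w`, so
`σ ≤ τ` gives `τʳ ≤ σʳ`. By Schensted's theorem the insertion tableau of `wʳ` is the transpose
of that of `w`, so every generating relation `S ≤ T` of the weak order on tableaux yields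
`Tᵗ ≤ Sᵗ`.

Schensted's theorem is proved along the classical route. Insertion is constant on Knuth
classes: when the three letters of an elementary Knuth move are inserted into a row, both
orders leave the same row behind and bump out words that are equal or again differ by an
elementary Knuth move, so induction on the rows applies. Every word is Knuth equivalent to the
reading word of its insertion tableau, Knuth equivalence is compatible with reversal, and
inserting the reversed reading word of a tableau builds its transpose one row of the tableau
(one column of the transpose) at a time.
-/

theorem insertRow_of_forall_le {R : List ℕ} {x : ℕ} (h : ∀ a ∈ R, a ≤ x) :
    insertRow R x = (R ++ [x], none) := by
  induction R with
  | nil => rfl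
  | cons r R ih =>
    simp only [List.forall_mem_cons] at h
    simp [insertRow, Nat.not_lt.2 h.1, ih h.2]

theorem insertRow_append_cons {A B : List ℕ} {b x : ℕ} (hA : ∀ a ∈ A, a ≤ x) (hxb : x < b) :
    insertRow (A ++ b :: B) x = (A ++ x :: B, some b) := by
  induction A with
  | nil => simp [insertRow, hxb]
  | cons a A ih =>
    simp only [List.forall_mem_cons] at hA
    simp [insertRow, Nat.not_lt.2 hA.1, ih hA.2]

theorem forall_le_or_eq_append_cons (R : List ℕ) (x : ℕ) :
    (∀ a ∈ R, a ≤ x) ∨ ∃ A b B, R = A ++ b :: B ∧ (∀ a ∈ A, a ≤ x) ∧ x < b := by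
  cases h : R.find? (x < ·) with
  | none => exact .inl fun a ha => by simpa using List.find?_eq_none.1 h a ha
  | some b =>
    obtain ⟨hb, A, B, rfl, hA⟩ := List.find?_eq_some_iff_append.1 h
    exact .inr ⟨A, b, B, rfl, fun a ha => by simpa using hA a ha, by simpa using hb⟩

theorem exists_bump_le {P Q : List ℕ} {x y : ℕ} (hP : ∀ a ∈ P, a ≤ y) (hxy : x < y) :
    ∃ A b B, P ++ y :: Q = A ++ b :: B ∧ (∀ a ∈ A, a ≤ x) ∧ x < b ∧ b ≤ y ∧ b ∈ P ++ [y] := by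
  rcases forall_le_or_eq_append_cons P x with hPx | ⟨A, b, B, rfl, hA, hxb⟩
  · exact ⟨P, y, Q, rfl, hPx, hxy, le_rfl, by simp⟩
  · exact ⟨A, b, B ++ y :: Q, by simp, hA, hxb, hP b (by simp), by simp⟩

theorem insertRow_perm (R : List ℕ) (x : ℕ) :
    ((insertRow R x).2.toList ++ (insertRow R x).1).Perm (x :: R) := by
  rcases forall_le_or_eq_append_cons R x with h | ⟨A, b, B, rfl, hA, hxb⟩
  · simp [insertRow_of_forall_le h, List.perm_append_singleton]
  · rw [insertRow_append_cons hA hxb]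
    exact ((List.perm_middle.cons b).trans (List.Perm.swap _ _ _)).trans
      (List.perm_middle.symm.cons x)

theorem insertRow_snd_eq_some {R : List ℕ} {x c : ℕ} (h : (insertRow R x).2 = some c) :
    c ∈ R ∧ x < c := by
  rcases forall_le_or_eq_append_cons R x with hR | ⟨A, b, B, rfl, hA, hxb⟩
  · simp [insertRow_of_forall_le hR] at h
  · simp only [insertRow_append_cons hA hxb, Option.some.injEq] at h
    exact ⟨by simp [h], h ▸ hxb⟩

theorem insertRow_fst_sorted {R : List ℕ} {x : ℕ} (hR : R.Pairwise (· < ·)) (hx : x ∉ R) :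
    (insertRow R x).1.Pairwise (· < ·) := by
  have hlt {a} (ha : a ∈ R) (hax : a ≤ x) : a < x := lt_of_le_of_ne hax (by grind)
  rcases forall_le_or_eq_append_cons R x with hle | ⟨A, b, B, rfl, hA, hxb⟩
  · simpa [insertRow_of_forall_le hle, List.pairwise_append] using
      ⟨hR, fun a ha => hlt ha (hle a ha)⟩
  · simp only [List.pairwise_append, List.pairwise_cons, List.mem_cons] at hR ⊢
    simp only [insertRow_append_cons hA hxb, List.pairwise_append, List.pairwise_cons,
      List.mem_cons]
    refine ⟨hR.1, ⟨fun a ha => lt_trans hxb (hR.2.1.1 a ha), hR.2.1.2⟩, ?_⟩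
    rintro a ha c (rfl | hc)
    · exact hlt (by simp [ha]) (hA a ha)
    · exact hR.2.2 a ha c (.inr hc)

theorem insertRow_insertRow_comm {A B : List ℕ} {b x z : ℕ} (hA : ∀ a ∈ A, a ≤ x)
    (hxb : x < b) (hbz : b < z) :
    insertRow (insertRow (A ++ b :: B) z).1 x = ((insertRow (A ++ x :: B) z).1, some b) ∧
      (insertRow (A ++ x :: B) z).2 = (insertRow (A ++ b :: B) z).2 := by
  have hAz : ∀ a ∈ A, a ≤ z := fun a ha => by have := hA a ha; omega
  rcases forall_le_or_eq_append_cons B z with hB | ⟨C, c, D, rfl, hC, hzc⟩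
  · have hbB : ∀ a ∈ A ++ b :: B, a ≤ z := by simp; grind
    have hxB : ∀ a ∈ A ++ x :: B, a ≤ z := by simp; grind
    rw [insertRow_of_forall_le hbB, insertRow_of_forall_le hxB]
    simpa using insertRow_append_cons (B := B ++ [z]) hA hxb
  · have hbC : ∀ a ∈ A ++ b :: C, a ≤ z := by simp; grind
    have hxC : ∀ a ∈ A ++ x :: C, a ≤ z := by simp; grind
    rw [show A ++ b :: (C ++ c :: D) = (A ++ b :: C) ++ c :: D by simp,
      show A ++ x :: (C ++ c :: D) = (A ++ x :: C) ++ c :: D by simp,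
      insertRow_append_cons hbC hzc, insertRow_append_cons hxC hzc]
    simpa using insertRow_append_cons (B := C ++ z :: D) hA hxb

def insertRowWord (R : List ℕ) : List ℕ → List ℕ × List ℕ
  | [] => (R, [])
  | x :: u =>
    ((insertRowWord (insertRow R x).1 u).1,
      (insertRow R x).2.toList ++ (insertRowWord (insertRow R x).1 u).2)

theorem insertTab_cons (R : List ℕ) (ts : List (List ℕ)) (x : ℕ) :
    insertTab (R :: ts) x = (insertRow R x).1 :: (insertRow R x).2.toList.foldl insertTab ts := by
  cases h : (insertRow R x).2 <;> simp [insertTab, h]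

theorem foldl_insertTab_cons (R : List ℕ) (ts : List (List ℕ)) (u : List ℕ) :
    u.foldl insertTab (R :: ts) =
      (insertRowWord R u).1 :: (insertRowWord R u).2.foldl insertTab ts := by
  induction u generalizing R ts with
  | nil => rfl
  | cons x u ih => simp [insertRowWord, insertTab_cons, ih, List.foldl_append]

theorem insertRowWord_perm (R u : List ℕ) :
    ((insertRowWord R u).2 ++ (insertRowWord R u).1).Perm (u ++ R) := by
  induction u generalizing R with
  | nil => simp [insertRowWord]
  | cons x u ih =>
    simp only [insertRowWord, List.append_assoc, List.cons_append]
    exact ((ih _).append_left _).trans <| (List.perm_append_comm_assoc _ _ _).trans <|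
      ((insertRow_perm R x).append_left u).trans List.perm_middle

inductive KnuthMove : List ℕ → List ℕ → Prop
  | yxz {x y z : ℕ} : x < y → y < z → KnuthMove [y, x, z] [y, z, x]
  | xzy {x y z : ℕ} : x < y → y < z → KnuthMove [x, z, y] [z, x, y]

theorem insertRowWord_yxz {R : List ℕ} {x y z : ℕ} (hR : R.Pairwise (· < ·)) (hxy : x < y)
    (hyz : y < z) :
    (insertRowWord R [y, x, z]).1 = (insertRowWord R [y, z, x]).1 ∧
      ((insertRowWord R [y, x, z]).2 = (insertRowWord R [y, z, x]).2 ∨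
        KnuthMove (insertRowWord R [y, x, z]).2 (insertRowWord R [y, z, x]).2) := by
  rcases forall_le_or_eq_append_cons R y with hRy | ⟨A₀, b₀, B₀, rfl, hA₀, hyb₀⟩
  · obtain ⟨A, b, B, hAB, hA, hxb, hby, -⟩ := exists_bump_le (Q := []) hRy hxy
    obtain ⟨h₁, h₂⟩ := insertRow_insertRow_comm (B := B) hA hxb (hby.trans_lt hyz)
    have hz : (insertRow (A ++ b :: B) z).2 = none := by
      rw [← hAB, insertRow_of_forall_le]
      simp only [List.mem_append, List.mem_singleton]
      grind
    simp [insertRowWord, insertRow_of_forall_le hRy, hAB, insertRow_append_cons hA hxb, h₁, h₂, hz]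
  · obtain ⟨A, b, B, hAB, hA, hxb, hby, -⟩ := exists_bump_le (Q := B₀) hA₀ hxy
    obtain ⟨h₁, h₂⟩ := insertRow_insertRow_comm (B := B) hA hxb (hby.trans_lt hyz)
    simp only [insertRowWord, insertRow_append_cons hA₀ hyb₀, hAB, insertRow_append_cons hA hxb,
      h₁, h₂, Option.toList_some, List.append_nil, List.cons_append,
      List.cons.injEq, true_and]
    cases hc : (insertRow (A ++ b :: B) z).2 with
    | none => simp
    | some c =>
      obtain ⟨hcR, hzc⟩ := insertRow_snd_eq_some hc
      rw [← hAB] at hcR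
      have hcB₀ : c ∈ B₀ := by simp at hcR; grind
      have hb₀c : b₀ < c := List.rel_of_pairwise_cons (List.pairwise_append.1 hR).2.1 hcB₀
      exact .inr (.yxz (by omega) hb₀c)

theorem insertRowWord_xzy_of_forall_le {R : List ℕ} {x y z : ℕ} (hRx : ∀ a ∈ R, a ≤ x)
    (hxy : x < y) (hyz : y < z) : insertRowWord R [x, z, y] = insertRowWord R [z, x, y] := by
  have hRz : ∀ a ∈ R ++ [x], a ≤ z := by simp; grind
  have h₀ : insertRow R z = (R ++ [z], none) :=
    insertRow_of_forall_le fun a ha => hRz a (by simp [ha])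
  have h₁ : insertRow (R ++ [x, z]) y = (R ++ [x, y], some z) := by
    simpa using insertRow_append_cons (A := R ++ [x]) (B := []) (by simp; grind) hyz
  have h₂ : insertRow (R ++ [z]) x = (R ++ [x], some z) := by
    simpa using insertRow_append_cons (B := []) hRx (by omega)
  have h₃ : insertRow (R ++ [x]) y = (R ++ [x, y], none) := by
    simpa using insertRow_of_forall_le (R := R ++ [x]) (by simp; grind)
  simp [insertRowWord, insertRow_of_forall_le hRx, insertRow_of_forall_le hRz, h₀, h₁, h₂, h₃]

theorem insertRowWord_xzy_of_lt {A B : List ℕ} {b x y z : ℕ} (hA : ∀ a ∈ A, a ≤ x)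
    (hbB : ∀ a ∈ B, b < a) (hxb : x < b) (hbz : b < z) (hxy : x < y) (hyz : y < z) :
    (insertRowWord (A ++ b :: B) [x, z, y]).1 = (insertRowWord (A ++ b :: B) [z, x, y]).1 ∧
      ((insertRowWord (A ++ b :: B) [x, z, y]).2 = (insertRowWord (A ++ b :: B) [z, x, y]).2 ∨
        KnuthMove (insertRowWord (A ++ b :: B) [x, z, y]).2
          (insertRowWord (A ++ b :: B) [z, x, y]).2) := by
  have hxz : insertRow (A ++ b :: B) x = (A ++ x :: B, some b) := insertRow_append_cons hA hxb
  rcases forall_le_or_eq_append_cons B z with hBz | ⟨C, c, D, rfl, hC, hzc⟩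
  · have h₁ : insertRow (A ++ b :: B) z = (A ++ b :: (B ++ [z]), none) := by
      simpa using insertRow_of_forall_le (R := A ++ b :: B) (by simp; grind)
    have h₂ : insertRow (A ++ x :: B) z = (A ++ x :: (B ++ [z]), none) := by
      simpa using insertRow_of_forall_le (R := A ++ x :: B) (by simp; grind)
    simp [insertRowWord, hxz, h₁, h₂, insertRow_append_cons (B := B ++ [z]) hA hxb]
  · have h₁ : insertRow (A ++ b :: (C ++ c :: D)) z = (A ++ b :: (C ++ z :: D), some c) := by
      simpa using insertRow_append_cons (A := A ++ b :: C) (B := D) (by simp; grind) hzc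
    have h₂ : insertRow (A ++ x :: (C ++ c :: D)) z = (A ++ x :: (C ++ z :: D), some c) := by
      simpa using insertRow_append_cons (A := A ++ x :: C) (B := D) (by simp; grind) hzc
    obtain ⟨A', d, B', hd, hA', hyd, hdz, hdmem⟩ :=
      exists_bump_le (P := A ++ x :: C) (Q := D) (by simp; grind) hyz
    have hbd : b < d := by
      simp only [List.mem_append, List.mem_cons, List.not_mem_nil, or_false] at hdmem
      rcases hdmem with (hdA | rfl | hdC) | rfl
      · have := hA d hdA; omega
      · omega
      · exact hbB d (by simp [hdC])
      · exact hbz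
    simp only [List.append_assoc, List.cons_append] at hd
    simp [insertRowWord, hxz, h₁, h₂, insertRow_append_cons (B := C ++ z :: D) hA hxb, hd,
      insertRow_append_cons hA' hyd]
    exact .inr (.xzy hbd (by omega))

theorem insertRowWord_xzy_of_gt {A B : List ℕ} {b x y z : ℕ} (hA : ∀ a ∈ A, a ≤ x)
    (hbB : ∀ a ∈ B, b < a) (hxb : x < b) (hzb : z < b) (hxy : x < y) (hyz : y < z) :
    (insertRowWord (A ++ b :: B) [x, z, y]).1 = (insertRowWord (A ++ b :: B) [z, x, y]).1 ∧
      ((insertRowWord (A ++ b :: B) [x, z, y]).2 = (insertRowWord (A ++ b :: B) [z, x, y]).2 ∨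
        KnuthMove (insertRowWord (A ++ b :: B) [z, x, y]).2
          (insertRowWord (A ++ b :: B) [x, z, y]).2) := by
  have hzx : insertRow (A ++ b :: B) z = (A ++ z :: B, some b) :=
    insertRow_append_cons (fun a ha => (hA a ha).trans (by omega)) hzb
  have hxz : insertRow (A ++ z :: B) x = (A ++ x :: B, some z) :=
    insertRow_append_cons hA (by omega)
  cases B with
  | nil =>
    have h₁ : insertRow (A ++ [x]) z = (A ++ [x, z], none) := by
      simpa using insertRow_of_forall_le (R := A ++ [x]) (by simp; grind)
    have h₂ : insertRow (A ++ [x, z]) y = (A ++ [x, y], some z) := by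
      simpa using insertRow_append_cons (A := A ++ [x]) (B := []) (by simp; grind) hyz
    have h₃ : insertRow (A ++ [x]) y = (A ++ [x, y], none) := by
      simpa using insertRow_of_forall_le (R := A ++ [x]) (by simp; grind)
    simp [insertRowWord, insertRow_append_cons hA hxb, hzx, hxz, h₁, h₂, h₃]
  | cons c D =>
    have hbc : b < c := hbB c (by simp)
    have h₁ : insertRow (A ++ x :: c :: D) z = (A ++ x :: z :: D, some c) := by
      simpa using insertRow_append_cons (A := A ++ [x]) (B := D) (by simp; grind) (by omega)
    have h₂ : insertRow (A ++ x :: z :: D) y = (A ++ x :: y :: D, some z) := by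
      simpa using insertRow_append_cons (A := A ++ [x]) (B := D) (by simp; grind) hyz
    have h₃ : insertRow (A ++ x :: c :: D) y = (A ++ x :: y :: D, some c) := by
      simpa using insertRow_append_cons (A := A ++ [x]) (B := D) (by simp; grind) (by omega)
    simp [insertRowWord, insertRow_append_cons hA hxb, hzx, hxz, h₁, h₂, h₃]
    exact .inr (.yxz hzb hbc)

theorem insertRowWord_xzy {R : List ℕ} {x y z : ℕ} (hR : R.Pairwise (· < ·)) (hzR : z ∉ R)
    (hxy : x < y) (hyz : y < z) :
    (insertRowWord R [x, z, y]).1 = (insertRowWord R [z, x, y]).1 ∧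
      ((insertRowWord R [x, z, y]).2 = (insertRowWord R [z, x, y]).2 ∨
        KnuthMove (insertRowWord R [x, z, y]).2 (insertRowWord R [z, x, y]).2 ∨
        KnuthMove (insertRowWord R [z, x, y]).2 (insertRowWord R [x, z, y]).2) := by
  rcases forall_le_or_eq_append_cons R x with hRx | ⟨A, b, B, rfl, hA, hxb⟩
  · simp [insertRowWord_xzy_of_forall_le hRx hxy hyz]
  have hbB := (List.pairwise_cons.1 (List.pairwise_append.1 hR).2.1).1
  rcases lt_or_gt_of_ne (show b ≠ z by rintro rfl; simp at hzR) with hbz | hzb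
  · exact (insertRowWord_xzy_of_lt hA hbB hxb hbz hxy hyz).imp_right (Or.imp_right .inl)
  · exact (insertRowWord_xzy_of_gt hA hbB hxb hzb hxy hyz).imp_right (Or.imp_right .inr)

theorem KnuthMove.perm {u v : List ℕ} (h : KnuthMove u v) : u.Perm v := by
  cases h
  · exact .cons _ (.swap _ _ _)
  · exact .swap _ _ _

theorem insertRowWord_of_knuthMove {R u v : List ℕ} (h : KnuthMove u v)
    (hR : R.Pairwise (· < ·)) (hnd : (u ++ R).Nodup) :
    (insertRowWord R u).1 = (insertRowWord R v).1 ∧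
      ((insertRowWord R u).2 = (insertRowWord R v).2 ∨
        KnuthMove (insertRowWord R u).2 (insertRowWord R v).2 ∨
        KnuthMove (insertRowWord R v).2 (insertRowWord R u).2) := by
  cases h with
  | yxz hxy hyz => exact (insertRowWord_yxz hR hxy hyz).imp_right (Or.imp_right .inl)
  | xzy hxy hyz => exact insertRowWord_xzy hR (by simp at hnd; tauto) hxy hyz

theorem nodup_insertRowWord_snd_append {R u : List ℕ} {ts : List (List ℕ)}
    (hnd : (u ++ (R :: ts).flatten).Nodup) :
    ((insertRowWord R u).2 ++ ts.flatten).Nodup := by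
  have h : (((insertRowWord R u).2 ++ (insertRowWord R u).1) ++ ts.flatten).Nodup :=
    ((insertRowWord_perm R u).append_right _).nodup_iff.2 (by simpa using hnd)
  exact (List.sublist_append_left _ _).append_right _ |>.nodup (by simpa using h)

theorem foldl_insertTab_eq_of_knuthMove (t : List (List ℕ)) {u v : List ℕ}
    (h : KnuthMove u v) (ht : ∀ r ∈ t, r.Pairwise (· < ·)) (hnd : (u ++ t.flatten).Nodup) :
    u.foldl insertTab t = v.foldl insertTab t := by
  induction t generalizing u v with
  | nil =>
    cases h with
    | yxz hxy hyz | xzy hxy hyz =>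
      simp [insertTab, insertRow, hxy, hyz, hxy.trans hyz, hxy.not_gt, hyz.not_gt,
        (hxy.trans hyz).not_gt]
  | cons R ts ih =>
    have hts : ∀ r ∈ ts, r.Pairwise (· < ·) := fun r hr => ht r (by simp [hr])
    obtain ⟨hrow, hbumped⟩ :=
      insertRowWord_of_knuthMove h (ht R (by simp)) (by simp at hnd ⊢; grind)
    have hndv : (v ++ (R :: ts).flatten).Nodup := (h.perm.append_right _).nodup_iff.1 hnd
    rw [foldl_insertTab_cons, foldl_insertTab_cons, hrow]
    rcases hbumped with heq | hmove | hmove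
    · rw [heq]
    · rw [ih hmove hts (nodup_insertRowWord_snd_append hnd)]
    · rw [ih hmove hts (nodup_insertRowWord_snd_append hndv)]

theorem KnuthMove.reverse {a b : List ℕ} (h : KnuthMove a b) :
    KnuthMove b.reverse a.reverse := by
  cases h with
  | yxz hxy hyz => exact .xzy hxy hyz
  | xzy hxy hyz => exact .yxz hxy hyz

def KnuthStep (u v : List ℕ) : Prop :=
  ∃ p a b q, KnuthMove a b ∧ u = p ++ a ++ q ∧ v = p ++ b ++ q

def KnuthEquiv : List ℕ → List ℕ → Prop := Relation.EqvGen KnuthStep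

namespace KnuthEquiv

theorem refl (u : List ℕ) : KnuthEquiv u u := Relation.EqvGen.refl u

theorem symm {u v : List ℕ} (h : KnuthEquiv u v) : KnuthEquiv v u :=
  Relation.EqvGen.symm _ _ h

theorem trans {u v w : List ℕ} (h₁ : KnuthEquiv u v) (h₂ : KnuthEquiv v w) : KnuthEquiv u w :=
  Relation.EqvGen.trans _ _ _ h₁ h₂

theorem of_move (p q : List ℕ) {a b : List ℕ} (h : KnuthMove a b) :
    KnuthEquiv (p ++ a ++ q) (p ++ b ++ q) :=
  Relation.EqvGen.rel _ _ ⟨p, a, b, q, h, rfl, rfl⟩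

theorem map {f : List ℕ → List ℕ} (hf : ∀ u v, KnuthStep u v → KnuthEquiv (f u) (f v))
    {u v : List ℕ} (h : KnuthEquiv u v) : KnuthEquiv (f u) (f v) := by
  induction h with
  | rel u v h => exact hf u v h
  | refl u => exact refl _
  | symm _ _ _ ih => exact ih.symm
  | trans _ _ _ _ _ ih₁ ih₂ => exact ih₁.trans ih₂

theorem append_left (w : List ℕ) {u v : List ℕ} (h : KnuthEquiv u v) :
    KnuthEquiv (w ++ u) (w ++ v) :=
  h.map (f := (w ++ ·)) fun _ _ ⟨p, a, b, q, hab, hu, hv⟩ => by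
    simpa [hu, hv] using of_move (w ++ p) q hab

theorem append_right (w : List ℕ) {u v : List ℕ} (h : KnuthEquiv u v) :
    KnuthEquiv (u ++ w) (v ++ w) :=
  h.map (f := (· ++ w)) fun _ _ ⟨p, a, b, q, hab, hu, hv⟩ => by
    simpa [hu, hv] using of_move p (q ++ w) hab

theorem reverse {u v : List ℕ} (h : KnuthEquiv u v) : KnuthEquiv u.reverse v.reverse :=
  h.map (f := List.reverse) fun _ _ ⟨p, a, b, q, hab, hu, hv⟩ => by
    simpa [hu, hv] using (of_move q.reverse p.reverse hab.reverse).symm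

theorem perm {u v : List ℕ} (h : KnuthEquiv u v) : u.Perm v := by
  induction h with
  | rel u v h =>
    obtain ⟨p, a, b, q, hab, rfl, rfl⟩ := h
    exact (hab.perm.append_left p).append_right q
  | refl u => exact .refl u
  | symm _ _ _ ih => exact ih.symm
  | trans _ _ _ _ _ ih₁ ih₂ => exact ih₁.trans ih₂

end KnuthEquiv

theorem insertTab_flatten_perm (t : List (List ℕ)) (x : ℕ) :
    (insertTab t x).flatten.Perm (x :: t.flatten) := by
  induction t generalizing x with
  | nil => simp [insertTab]
  | cons R ts ih =>
    have hbumped : ((insertRow R x).2.toList.foldl insertTab ts).flatten.Perm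
        ((insertRow R x).2.toList ++ ts.flatten) := by
      cases (insertRow R x).2 with
      | none => rfl
      | some b => exact ih b
    rw [insertTab_cons, List.flatten_cons]
    exact (hbumped.append_left _).trans <| (List.perm_append_comm_assoc _ _ _).trans <|
      by simpa using (insertRow_perm R x).append_right ts.flatten

theorem RSK_append (u v : List ℕ) : RSK (u ++ v) = v.foldl insertTab (RSK u) :=
  List.foldl_append

theorem RSK_flatten_perm (w : List ℕ) : (RSK w).flatten.Perm w := by
  induction w using List.reverseRecOn with
  | nil => rfl
  | append_singleton u x ih =>
    rw [RSK_append, List.foldl_cons, List.foldl_nil]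
    exact (insertTab_flatten_perm _ x).trans
      ((ih.cons x).trans (List.perm_append_singleton x u).symm)

/-- `S` may stand directly below `R`; stated through `[c]?`, it also forces
`S.length ≤ R.length`. -/
def ColumnStrict (R S : List ℕ) : Prop :=
  ∀ (c b : ℕ), S[c]? = some b → ∃ a, R[c]? = some a ∧ a < b

def IsTableau (t : List (List ℕ)) : Prop :=
  (∀ r ∈ t, r.Pairwise (· < ·)) ∧ t.IsChain ColumnStrict

theorem getElem?_append_cons_of_ne {A B : List ℕ} {x y c : ℕ} (hc : c ≠ A.length) :
    (A ++ x :: B)[c]? = (A ++ y :: B)[c]? := by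
  rcases lt_or_gt_of_ne hc with hc | hc
  · simp [List.getElem?_append_left hc]
  · obtain ⟨k, hk⟩ : ∃ k, c - A.length = k + 1 := ⟨c - A.length - 1, by omega⟩
    simp [List.getElem?_append_right hc.le, hk]

theorem getElem?_append_cons_le {A B : List ℕ} {b x c a : ℕ} (hxb : x ≤ b)
    (ha : (A ++ b :: B)[c]? = some a) : ∃ a', (A ++ x :: B)[c]? = some a' ∧ a' ≤ a := by
  by_cases hc : c = A.length
  · subst hc
    simp at ha
    exact ⟨x, by simp, ha ▸ hxb⟩
  · exact ⟨a, by rwa [getElem?_append_cons_of_ne hc], le_rfl⟩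

theorem getElem?_append_cons_le_of_le {A B : List ℕ} {x c : ℕ} (hA : ∀ a ∈ A, a ≤ x)
    (hc : c ≤ A.length) : ∃ a', (A ++ x :: B)[c]? = some a' ∧ a' ≤ x := by
  rcases hc.lt_or_eq with hc | rfl
  · exact ⟨A[c], by simp [List.getElem?_append_left hc], hA _ (List.getElem_mem hc)⟩
  · exact ⟨x, by simp, le_rfl⟩

namespace ColumnStrict

theorem trans {R S T : List ℕ} (hRS : ColumnStrict R S) (hST : ColumnStrict S T) :
    ColumnStrict R T := fun c b hb => by
  obtain ⟨s, hs, hsb⟩ := hST c b hb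
  obtain ⟨a, ha, has⟩ := hRS c s hs
  exact ⟨a, ha, has.trans hsb⟩

instance : Trans ColumnStrict ColumnStrict ColumnStrict := ⟨trans⟩

theorem nil_right (R : List ℕ) : ColumnStrict R [] := by
  simp [ColumnStrict]

theorem append_singleton {R S : List ℕ} (h : ColumnStrict R S) (x : ℕ) :
    ColumnStrict (R ++ [x]) S := fun c b hb => by
  obtain ⟨a, ha, hab⟩ := h c b hb
  exact ⟨a, by rwa [List.getElem?_append_left (List.getElem?_eq_some_iff.1 ha).1], hab⟩

theorem insertRow {A B S : List ℕ} {b x : ℕ} (h : ColumnStrict (A ++ b :: B) S)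
    (hA : ∀ a ∈ A, a ≤ x) (hxb : x < b) : ColumnStrict (A ++ x :: B) (insertRow S b).1 := by
  -- the bumped `b` lands in `S` no further right than the column it leaves in the row above
  have hcol : ∀ P Q, S = P ++ Q → (∀ a ∈ P, a ≤ b) → P.length ≤ A.length := by
    rintro P Q rfl hP
    by_contra hlt
    obtain ⟨a, ha, has⟩ := h A.length P[A.length]
      (by simp [List.getElem?_append_left (not_le.1 hlt)])
    simp at ha
    have := hP _ (List.getElem_mem (not_le.1 hlt))
    omega
  have hnew : ∀ c ≤ A.length, ∃ a, (A ++ x :: B)[c]? = some a ∧ a < b := fun c hc => by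
    obtain ⟨a, ha, hax⟩ := getElem?_append_cons_le_of_le (B := B) hA hc
    exact ⟨a, ha, hax.trans_lt hxb⟩
  have hold : ∀ c s, S[c]? = some s → ∃ a, (A ++ x :: B)[c]? = some a ∧ a < s := fun c s hs => by
    obtain ⟨a, ha, has⟩ := h c s hs
    obtain ⟨a', ha', ha'a⟩ := getElem?_append_cons_le hxb.le ha
    exact ⟨a', ha', ha'a.trans_lt has⟩
  rcases forall_le_or_eq_append_cons S b with hS | ⟨C, d, D, rfl, hC, hbd⟩
  · rw [insertRow_of_forall_le hS]
    intro c s hs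
    rcases lt_or_ge c S.length with hc | hc
    · exact hold c s (by rwa [List.getElem?_append_left hc] at hs)
    · rw [List.getElem?_append_right hc, List.getElem?_singleton] at hs
      split_ifs at hs with hc'
      obtain rfl : c = S.length := by omega
      exact Option.some_injective _ hs ▸ hnew _ (hcol S [] (by simp) hS)
  · rw [insertRow_append_cons hC hbd]
    intro c s hs
    by_cases hc : c = C.length
    · subst hc
      simp only [List.getElem?_append_right le_rfl, Nat.sub_self, List.getElem?_cons_zero,
        Option.some.injEq] at hs
      exact hs ▸ hnew _ (hcol C _ rfl hC)
    · exact hold c s (by rwa [getElem?_append_cons_of_ne hc] at hs)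

end ColumnStrict

theorem head?_insertTab (ts : List (List ℕ)) (b : ℕ) :
    (insertTab ts b).head? = some (insertRow (ts.headD []) b).1 := by
  cases ts with
  | nil => rfl
  | cons S ts => simp [insertTab_cons]

theorem isTableau_insertTab {t : List (List ℕ)} {x : ℕ} (ht : IsTableau t)
    (hx : (x :: t.flatten).Nodup) : IsTableau (insertTab t x) := by
  induction t generalizing x with
  | nil => exact ⟨by simp [insertTab], by simp [insertTab]⟩
  | cons R ts ih =>
    obtain ⟨hrows, hchain⟩ := ht
    rw [List.isChain_cons] at hchain
    have hxR : x ∉ R := by simp at hx; tauto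
    have hR' := insertRow_fst_sorted (hrows R (by simp)) hxR
    rcases forall_le_or_eq_append_cons R x with hRx | ⟨A, b, B, rfl, hA, hxb⟩
    · rw [insertRow_of_forall_le hRx] at hR'
      rw [insertTab_cons, insertRow_of_forall_le hRx]
      refine ⟨?_, List.isChain_cons.2 ⟨fun S hS => (hchain.1 S hS).append_singleton x, hchain.2⟩⟩
      simpa using ⟨hR', fun r hr => hrows r (by simp [hr])⟩
    · have hnd : (b :: ts.flatten).Nodup := by
        simp only [List.flatten_cons, List.nodup_cons, List.nodup_append] at hx
        grind
      have hts := ih ⟨fun r hr => hrows r (by simp [hr]), hchain.2⟩ hnd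
      have hRS : ColumnStrict (A ++ b :: B) (ts.headD []) := by
        cases ts with
        | nil => exact .nil_right _
        | cons S _ => exact hchain.1 S rfl
      rw [insertRow_append_cons hA hxb] at hR'
      rw [insertTab_cons, insertRow_append_cons hA hxb]
      refine ⟨?_, List.isChain_cons.2 ⟨?_, hts.2⟩⟩
      · simpa using ⟨hR', hts.1⟩
      · simpa [head?_insertTab] using hRS.insertRow hA hxb

theorem RSK_isTableau {w : List ℕ} (hw : w.Nodup) : IsTableau (RSK w) := by
  induction w using List.reverseRecOn with
  | nil => exact ⟨by simp [RSK], by simp [RSK]⟩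
  | append_singleton u x ih =>
    have hxu : (x :: u).Nodup := List.perm_append_singleton x u |>.nodup_iff.1 hw
    rw [RSK_append, List.foldl_cons, List.foldl_nil]
    exact isTableau_insertTab (ih (List.nodup_cons.1 hxu).2)
      (((RSK_flatten_perm u).cons x).nodup_iff.2 hxu)

theorem RSK_eq_of_knuthEquiv {u v : List ℕ} (h : KnuthEquiv u v) (hu : u.Nodup) :
    RSK u = RSK v := by
  induction h with
  | rel u v h =>
    obtain ⟨p, a, b, q, hab, rfl, rfl⟩ := h
    have hpa : (p ++ a).Nodup := (List.sublist_append_left _ q).nodup hu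
    have hnd : (a ++ (RSK p).flatten).Nodup :=
      ((RSK_flatten_perm p).append_left a).nodup_iff.2 (List.perm_append_comm.nodup_iff.1 hpa)
    simp only [RSK_append, foldl_insertTab_eq_of_knuthMove _ hab
      (RSK_isTableau (List.nodup_append.1 hpa).1).1 hnd]
  | refl => rfl
  | symm u v h ih => exact (ih ((KnuthEquiv.perm h).nodup_iff.2 hu)).symm
  | trans u v w huv _ ih₁ ih₂ => exact (ih₁ hu).trans (ih₂ ((KnuthEquiv.perm huv).nodup_iff.1 hu))

theorem knuthEquiv_slide {b x : ℕ} {B : List ℕ} (hB : (b :: B).Pairwise (· < ·)) (hxb : x < b) :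
    KnuthEquiv (b :: B ++ [x]) (b :: x :: B) := by
  induction B generalizing b with
  | nil => exact .refl _
  | cons c B ih =>
    have hbc : b < c := List.rel_of_pairwise_cons hB (by simp)
    refine ((ih (List.pairwise_cons.1 hB).2 (hxb.trans hbc)).append_left [b]).trans ?_
    simpa using (KnuthEquiv.of_move [] B (KnuthMove.yxz hxb hbc)).symm

theorem knuthEquiv_bubble {A B : List ℕ} {b x : ℕ} (hA : A.Pairwise (· < ·))
    (hAx : ∀ a ∈ A, a < x) (hxb : x < b) :
    KnuthEquiv (A ++ b :: x :: B) (b :: (A ++ x :: B)) := by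
  induction A with
  | nil => exact .refl _
  | cons a A ih =>
    obtain ⟨hax, hAx⟩ := List.forall_mem_cons.1 hAx
    refine ((ih (List.pairwise_cons.1 hA).2 hAx).append_left [a]).trans ?_
    obtain ⟨y, rest, hrest, hay, hyb⟩ : ∃ y rest, A ++ x :: B = y :: rest ∧ a < y ∧ y < b := by
      cases A with
      | nil => exact ⟨x, B, rfl, hax, hxb⟩
      | cons a' A => exact ⟨a', A ++ x :: B, rfl, List.rel_of_pairwise_cons hA (by simp),
          (hAx a' (by simp)).trans hxb⟩
    simpa [hrest] using KnuthEquiv.of_move [] rest (KnuthMove.xzy hay hyb)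

theorem knuthEquiv_insertRow {R : List ℕ} {x : ℕ} (hR : R.Pairwise (· < ·)) (hxR : x ∉ R) :
    KnuthEquiv (R ++ [x]) ((insertRow R x).2.toList ++ (insertRow R x).1) := by
  rcases forall_le_or_eq_append_cons R x with hRx | ⟨A, b, B, rfl, hA, hxb⟩
  · simpa [insertRow_of_forall_le hRx] using KnuthEquiv.refl _
  · obtain ⟨hApw, hbB, hAbB⟩ := List.pairwise_append.1 hR
    have hAx : ∀ a ∈ A, a < x := fun a ha => lt_of_le_of_ne (hA a ha) (by rintro rfl; simp_all)
    rw [insertRow_append_cons hA hxb]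
    simpa using ((knuthEquiv_slide hbB hxb).append_left A).trans (knuthEquiv_bubble hApw hAx hxb)

theorem knuthEquiv_readWord_insertTab {t : List (List ℕ)} {x : ℕ}
    (ht : ∀ r ∈ t, r.Pairwise (· < ·)) (hx : (x :: t.flatten).Nodup) :
    KnuthEquiv (readWord t ++ [x]) (readWord (insertTab t x)) := by
  induction t generalizing x with
  | nil => exact .refl _
  | cons R ts ih =>
    have hbumped : KnuthEquiv (readWord ts ++ (insertRow R x).2.toList)
        (readWord ((insertRow R x).2.toList.foldl insertTab ts)) := by
      cases hb : (insertRow R x).2 with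
      | none => simpa using .refl _
      | some b =>
        have hbR := (insertRow_snd_eq_some hb).1
        refine ih (fun r hr => ht r (by simp [hr])) ?_
        simp only [List.flatten_cons, List.nodup_cons, List.nodup_append] at hx
        grind
    have hrow := knuthEquiv_insertRow (ht R (by simp)) (by simp at hx; tauto)
    rw [insertTab_cons]
    simp only [readWord, List.reverse_cons, List.flatten_append, List.flatten_singleton,
      List.append_assoc] at hbumped ⊢
    exact (hrow.append_left _).trans (by simpa using hbumped.append_right (insertRow R x).1)

theorem knuthEquiv_readWord_RSK {w : List ℕ} (hw : w.Nodup) : KnuthEquiv w (readWord (RSK w)) := by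
  induction w using List.reverseRecOn with
  | nil => exact .refl _
  | append_singleton u x ih =>
    have hxu : (x :: u).Nodup := List.perm_append_singleton x u |>.nodup_iff.1 hw
    rw [RSK_append, List.foldl_cons, List.foldl_nil]
    exact ((ih (List.nodup_cons.1 hxu).2).append_right [x]).trans
      (knuthEquiv_readWord_insertTab (RSK_isTableau (List.nodup_cons.1 hxu).2).1
        (((RSK_flatten_perm u).cons x).nodup_iff.2 hxu))

def column (t : List (List ℕ)) (c : ℕ) : List ℕ := t.filterMap (·[c]?)

theorem transposeTab_eq_cons {t : List (List ℕ)} (h : t.headD [] ≠ []) :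
    transposeTab t = column t 0 :: transposeTab (t.map List.tail) := by
  obtain ⟨W, hW⟩ : ∃ W, (t.headD []).length = W + 1 :=
    ⟨(t.headD []).length - 1, by have := List.length_pos_iff.2 h; omega⟩
  have hW' : ((t.map List.tail).headD []).length = W := by cases t <;> simp_all
  simp only [transposeTab, hW, hW', List.range_succ_eq_map, List.map_cons, List.map_map,
    List.cons.injEq, true_and, column]
  refine List.map_congr_left fun c _ => ?_
  simp [List.filterMap_map]

theorem transposeTab_append_nil (T : List (List ℕ)) :
    transposeTab (T ++ [[]]) = transposeTab T := by
  have hcol (c : ℕ) : (T ++ [[]]).filterMap (·[c]?) = T.filterMap (·[c]?) := by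
    simp [List.filterMap_append]
  simp only [transposeTab, hcol]
  cases T <;> rfl

theorem ColumnStrict.tail {R S : List ℕ} (h : ColumnStrict R S) : ColumnStrict R.tail S.tail :=
  fun c b hb => by simpa using h (c + 1) b (by simpa using hb)

theorem ColumnStrict.of_cons {R S : List ℕ} {c : ℕ} (hS : (c :: S).Pairwise (· < ·))
    (h : ColumnStrict R (c :: S)) : ColumnStrict R S := fun i b hb => by
  obtain ⟨hi, rfl⟩ := List.getElem?_eq_some_iff.1 hb
  obtain ⟨a, ha, hab⟩ := h i ((c :: S)[i]'(by simp; omega)) (List.getElem?_eq_getElem _)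
  exact ⟨a, ha, hab.trans <|
    List.pairwise_iff_getElem.1 hS i (i + 1) (by simp; omega) (by simp; omega) (by omega)⟩

theorem forall_mem_column_zero_lt {T : List (List ℕ)} {c : ℕ} {s : List ℕ}
    (hT : ∀ r ∈ T, ColumnStrict r (c :: s)) : ∀ a ∈ column T 0, a < c := fun a ha => by
  obtain ⟨r, hr, hra⟩ := List.mem_filterMap.1 ha
  obtain ⟨a', ha', ha'c⟩ := hT r hr 0 c rfl
  exact (Option.some_injective _ (hra.symm.trans ha')) ▸ ha'c

theorem headD_append_ne_nil {T : List (List ℕ)} {c : ℕ} {s : List ℕ}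
    (hT : ∀ r ∈ T, ColumnStrict r (c :: s)) : (T ++ [c :: s]).headD [] ≠ [] := by
  cases T with
  | nil => simp
  | cons r T =>
    obtain ⟨a, ha, -⟩ := hT r (by simp) 0 c rfl
    simpa using List.ne_nil_of_length_pos (List.getElem?_eq_some_iff.1 ha).1

theorem transposeTab_append_cons {T : List (List ℕ)} {c : ℕ} {s : List ℕ}
    (h : (T ++ [c :: s]).headD [] ≠ []) :
    transposeTab (T ++ [c :: s]) =
      (column T 0 ++ [c]) :: transposeTab (T.map List.tail ++ [s]) := by
  rw [transposeTab_eq_cons h]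
  simp [column, List.filterMap_append]

theorem insertTab_transposeTab (T : List (List ℕ)) (c : ℕ) (s : List ℕ)
    (hs : (c :: s).Pairwise (· < ·)) (hT : ∀ r ∈ T, ColumnStrict r (c :: s)) :
    insertTab (transposeTab (T ++ [s])) c = transposeTab (T ++ [c :: s]) := by
  rw [transposeTab_append_cons (headD_append_ne_nil hT)]
  induction s generalizing T c with
  | nil =>
    rw [transposeTab_append_nil, transposeTab_append_nil]
    rcases eq_or_ne T [] with rfl | hT0
    · rfl
    have hhead : T.headD [] ≠ [] := by
      cases T with
      | nil => contradiction
      | cons r T => simpa using headD_append_ne_nil hT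
    rw [transposeTab_eq_cons hhead, insertTab_cons,
      insertRow_of_forall_le fun a ha => (forall_mem_column_zero_lt hT a ha).le]
    rfl
  | cons d s ih =>
    have hcd : c < d := List.rel_of_pairwise_cons hs (by simp)
    have hT' : ∀ r ∈ T.map List.tail, ColumnStrict r (d :: s) := by
      simpa using fun r hr => (hT r hr).tail
    rw [transposeTab_append_cons (headD_append_ne_nil fun r hr => (hT r hr).of_cons hs),
      insertTab_cons, insertRow_append_cons (B := [])
        (fun a ha => (forall_mem_column_zero_lt hT a ha).le) hcd]
    simp only [Option.toList_some, List.foldl_cons, List.foldl_nil]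
    rw [ih _ d (List.pairwise_cons.1 hs).2 hT',
      ← transposeTab_append_cons (headD_append_ne_nil hT')]

theorem foldl_insertTab_transposeTab (T : List (List ℕ)) (s : List ℕ)
    (hs : s.Pairwise (· < ·)) (hT : ∀ r ∈ T, ColumnStrict r s) :
    s.reverse.foldl insertTab (transposeTab T) = transposeTab (T ++ [s]) := by
  induction s with
  | nil => exact (transposeTab_append_nil T).symm
  | cons c s ih =>
    rw [List.reverse_cons, List.foldl_append, List.foldl_cons, List.foldl_nil,
      ih (List.pairwise_cons.1 hs).2 fun r hr => (hT r hr).of_cons hs]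
    exact insertTab_transposeTab T c s hs hT

theorem RSK_reverse_readWord {t : List (List ℕ)} (ht : IsTableau t) :
    RSK (readWord t).reverse = transposeTab t := by
  induction t using List.reverseRecOn with
  | nil => rfl
  | append_singleton T s ih =>
    obtain ⟨hrows, hchain⟩ := ht
    obtain ⟨hT, -, hTs⟩ := List.pairwise_append.1 (List.isChain_iff_pairwise.1 hchain)
    have hword : (readWord (T ++ [s])).reverse = (readWord T).reverse ++ s.reverse := by
      simp [readWord]
    rw [hword, RSK_append, ih ⟨fun r hr => hrows r (by simp [hr]), List.isChain_iff_pairwise.2 hT⟩]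
    exact foldl_insertTab_transposeTab T s (hrows s (by simp)) fun r hr => hTs r hr s (by simp)

theorem RSK_reverse {w : List ℕ} (hw : w.Nodup) : RSK w.reverse = transposeTab (RSK w) := by
  rw [RSK_eq_of_knuthEquiv (knuthEquiv_readWord_RSK hw).reverse (List.nodup_reverse.2 hw),
    RSK_reverse_readWord (RSK_isTableau hw)]

theorem List.Nodup.idxOf_reverse {l : List ℕ} (hl : l.Nodup) {a : ℕ} (ha : a ∈ l) :
    l.reverse.idxOf a = l.length - 1 - l.idxOf a := by
  have hi := List.idxOf_lt_length_iff.2 ha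
  have hj : l.length - 1 - l.idxOf a < l.reverse.length := by simp; omega
  have hget : l.reverse[l.length - 1 - l.idxOf a] = a := by
    rw [List.getElem_reverse]
    simp only [show l.length - 1 - (l.length - 1 - l.idxOf a) = l.idxOf a by omega]
    exact List.getElem_idxOf hi
  conv_lhs => rw [← hget]
  exact (List.nodup_reverse.2 hl).idxOf_getElem _ hj

theorem mem_invL_reverse_iff {l : List ℕ} (hl : l.Nodup) {a b : ℕ} (ha : a ∈ l) (hb : b ∈ l)
    (hab : a < b) : (a, b) ∈ InvL l.reverse ↔ (a, b) ∉ InvL l := by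
  have hne : l.idxOf a ≠ l.idxOf b := fun h => hab.ne ((List.idxOf_inj ha).1 h)
  have hia := List.idxOf_lt_length_iff.2 ha
  have hib := List.idxOf_lt_length_iff.2 hb
  simp only [InvL, Set.mem_ofPred_eq, List.mem_reverse, hl.idxOf_reverse ha, hl.idxOf_reverse hb,
    ha, hb, hab, true_and]
  omega

theorem wordLE_reverse {σ τ : List ℕ} (hσ : σ.Nodup) (hτ : τ.Nodup) (hστ : σ.Perm τ)
    (h : wordLE σ τ) : wordLE τ.reverse σ.reverse := by
  rintro ⟨a, b⟩ hinv
  have ha : a ∈ τ := List.mem_reverse.1 hinv.2.1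
  have hb : b ∈ τ := List.mem_reverse.1 hinv.2.2.1
  rw [mem_invL_reverse_iff hσ (hστ.mem_iff.2 ha) (hστ.mem_iff.2 hb) hinv.1]
  exact fun hσinv => (mem_invL_reverse_iff hτ ha hb hinv.1).1 hinv (h hσinv)

theorem tabRel_transpose {n : ℕ} {S T : List (List ℕ)} (h : tabRel n S T) :
    tabRel n (transposeTab T) (transposeTab S) := by
  obtain ⟨σ, τ, hσ, hτ, rfl, rfl, hστ⟩ := h
  have hσnd : σ.Nodup := hσ.nodup_iff.2 List.nodup_range'
  have hτnd : τ.Nodup := hτ.nodup_iff.2 List.nodup_range'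
  exact ⟨τ.reverse, σ.reverse, (List.reverse_perm τ).trans hτ, (List.reverse_perm σ).trans hσ,
    RSK_reverse hτnd, RSK_reverse hσnd, wordLE_reverse hσnd hτnd (hσ.trans hτ.symm) hστ⟩

theorem transpose_order_reversing_general (n : ℕ) (S T : List (List ℕ))
    (h : tabLE n S T) :
    tabLE n (transposeTab T) (transposeTab S) := by
  induction h with
  | single h => exact .single (tabRel_transpose h)
  | tail _ h ih => exact .head (tabRel_transpose h) ih

/-- If `S ≤_weak T` in `SYT_n` then `T^t ≤_weak S^t`:
transposition is order reversing for the weak order. -/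
theorem transpose_order_reversing (n : ℕ) (S T : List (List ℕ))
    (hS : IsSYT n S) (hT : IsSYT n T) (h : tabLE n S T) :
    tabLE n (transposeTab T) (transposeTab S) :=
  transpose_order_reversing_general n S T h
end

section
/- The weak order on SYT_n is not preserved by the single dual Knuth relation (inner translation) map: for the tableaux S with rows (1,2,4),(3,5,6) and T with rows (1,2,4),(3,6),(5) in SYT_6, one has S ≤_weak T; but the tableaux S' with rows (1,2,3),(4,5,6) and T' with rows (1,2,5),(3,6),(4), which are obtained from S and T respectively by applying a single dual Knuth relation determined by the triple {3,4,5}, satisfy S' ≰_weak T'. -/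
/-!
`S ≤ T` is witnessed by the words `315264 ≤ 531264`, two descent swaps apart, whose insertion
tableaux are `S` and `T`.

For `S' ≰ T'`: the right weak order on permutations is the reflexive-transitive closure of
swapping an adjacent descent `ba ↦ ab`. Hence a set of tableaux that is closed under the descent
swaps of the words in its Knuth classes is a lower set of the weak order on `SYT_n`. The twelve
tableaux below `T'` form such a set in `SYT_6`, as a finite check over `S_6` confirms, and `S'`
is not among them.
-/

open List Relation

namespace List

theorem Nodup.pair_sublist_iff {α : Type*} [DecidableEq α] {w : List α} (hw : w.Nodup)
    {x y : α} : [x, y] <+ w ↔ x ∈ w ∧ y ∈ w ∧ w.idxOf x < w.idxOf y := by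
  induction w with
  | nil => simp
  | cons z w ih =>
    obtain ⟨hz, hw⟩ := nodup_cons.1 hw
    have := ih hw
    grind

theorem pair_sublist_swap {α : Type*} {l r : List α} {p q x y : α}
    (h : [p, q] <+ l ++ x :: y :: r) (hne : (p, q) ≠ (x, y)) : [p, q] <+ l ++ y :: x :: r := by
  induction l <;> grind

end List

theorem IsPermWord.nodup {n : ℕ} {w : List ℕ} (h : IsPermWord n w) : w.Nodup :=
  h.nodup_iff.2 nodup_range'

theorem mem_InvL_iff {w : List ℕ} (hw : w.Nodup) {p : ℕ × ℕ} :
    p ∈ InvL w ↔ p.1 < p.2 ∧ [p.2, p.1] <+ w := by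
  rw [hw.pair_sublist_iff]
  simp only [InvL, Set.mem_ofPred_eq]
  tauto

def DescentSwap (w u : List ℕ) : Prop :=
  ∃ l r a b, a < b ∧ w = l ++ b :: a :: r ∧ u = l ++ a :: b :: r

def descentSwaps : List ℕ → List (List ℕ)
  | b :: a :: r =>
    (if a < b then [a :: b :: r] else []) ++ (descentSwaps (a :: r)).map (b :: ·)
  | _ => []

namespace DescentSwap

theorem perm {w u : List ℕ} (h : DescentSwap w u) : u ~ w := by
  obtain ⟨l, r, a, b, -, rfl, rfl⟩ := h
  exact .append_left l (.swap b a r)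

theorem cons {w u : List ℕ} (h : DescentSwap w u) (x : ℕ) : DescentSwap (x :: w) (x :: u) := by
  obtain ⟨l, r, a, b, hab, rfl, rfl⟩ := h
  exact ⟨x :: l, r, a, b, hab, rfl, rfl⟩

theorem mem_descentSwaps {w u : List ℕ} (h : DescentSwap w u) : u ∈ descentSwaps w := by
  obtain ⟨l, r, a, b, hab, rfl, rfl⟩ := h
  induction l with
  | nil => simp [descentSwaps, hab]
  | cons c l ih => cases l <;> simp_all [descentSwaps]

theorem wordLE {w u : List ℕ} (h : DescentSwap w u) (hw : w.Nodup) : wordLE u w := by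
  intro p hp
  have hu := h.perm.nodup_iff.2 hw
  obtain ⟨l, r, a, b, hab, rfl, rfl⟩ := h
  obtain ⟨hp_lt, hp_sub⟩ := (mem_InvL_iff hu).1 hp
  refine (mem_InvL_iff hw).2 ⟨hp_lt, pair_sublist_swap hp_sub ?_⟩
  rintro ⟨⟩
  exact lt_asymm hp_lt hab

end DescentSwap

theorem reflTransGen_descentSwap_bubble {x : ℕ} {p s : List ℕ} (hp : ∀ y ∈ p, y < x) :
    ReflTransGen DescentSwap (x :: (p ++ s)) (p ++ x :: s) := by
  induction p with
  | nil => exact .refl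
  | cons y p ih =>
    refine .head ⟨[], p ++ s, y, x, hp y mem_cons_self, rfl, rfl⟩ ?_
    exact (ih fun z hz => hp z (mem_cons_of_mem y hz)).lift (y :: ·) fun _ _ h => h.cons y

theorem reflTransGen_descentSwap_of_wordLE {σ τ : List ℕ} (hτ : τ.Nodup) (hστ : σ ~ τ)
    (h : wordLE σ τ) : ReflTransGen DescentSwap τ σ := by
  induction τ generalizing σ with
  | nil => rw [hστ.eq_nil]
  | cons x τ ih =>
    obtain ⟨hxτ, hτ'⟩ := nodup_cons.1 hτ
    obtain ⟨p, s, rfl⟩ := append_of_mem (hστ.mem_iff.2 mem_cons_self)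
    have hσ : (p ++ x :: s).Nodup := hστ.nodup_iff.2 hτ
    obtain ⟨hxps, hps⟩ := nodup_cons.1 (nodup_middle.1 hσ)
    have hle : wordLE (p ++ s) τ := by
      intro q hq
      obtain ⟨hq_lt, hq_sub⟩ := (mem_InvL_iff hps).1 hq
      have hq_sub' := hq_sub.trans ((sublist_cons_self x s).append_left p)
      have hqτ := ((mem_InvL_iff hτ).1 (h ((mem_InvL_iff hσ).2 ⟨hq_lt, hq_sub'⟩))).2
      refine (mem_InvL_iff hτ').2 ⟨hq_lt, hqτ.of_cons_of_ne ?_⟩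
      rintro rfl
      exact hxps (hq_sub.subset mem_cons_self)
    -- `x` heads `τ`, so in `σ` only smaller letters may precede it.
    have hpx : ∀ y ∈ p, y < x := by
      intro y hy
      have hyx : y ≠ x := by
        rintro rfl
        exact hxps (mem_append_left s hy)
      refine hyx.lt_or_gt.resolve_right fun hxy => hxτ ?_
      have hyx_sub : [y, x] <+ p ++ x :: s :=
        (singleton_sublist.2 hy).append (singleton_sublist.2 mem_cons_self)
      have hyxσ : (x, y) ∈ InvL (p ++ x :: s) := (mem_InvL_iff hσ).2 ⟨hxy, hyx_sub⟩
      exact (((mem_InvL_iff hτ).1 (h hyxσ)).2.of_cons_of_ne hyx).subset (by simp)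
    have hperm : p ++ s ~ τ := (perm_middle.symm.trans hστ).cons_inv
    exact ((ih hτ' hperm hle).lift (x :: ·) fun _ _ h => h.cons x).trans
      (reflTransGen_descentSwap_bubble hpx)

theorem wordLE_of_reflTransGen_descentSwap {σ τ : List ℕ} (h : ReflTransGen DescentSwap τ σ)
    (hτ : τ.Nodup) : wordLE σ τ := by
  induction h using ReflTransGen.head_induction_on with
  | refl => exact subset_rfl
  | head h _ ih => exact fun p hp => h.wordLE hτ (ih (h.perm.nodup_iff.2 hτ) hp)

theorem wordLE_iff_reflTransGen_descentSwap {σ τ : List ℕ} (hτ : τ.Nodup) (hστ : σ ~ τ) :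
    wordLE σ τ ↔ ReflTransGen DescentSwap τ σ :=
  ⟨reflTransGen_descentSwap_of_wordLE hτ hστ, (wordLE_of_reflTransGen_descentSwap · hτ)⟩

def DescentSwapClosed (n : ℕ) (P : List (List ℕ) → Prop) : Prop :=
  ∀ τ σ, IsPermWord n τ → DescentSwap τ σ → P (RSK τ) → P (RSK σ)

namespace DescentSwapClosed

variable {n : ℕ} {P : List (List ℕ) → Prop}

theorem of_reflTransGen (hP : DescentSwapClosed n P) {τ σ : List ℕ} (hτ : IsPermWord n τ)
    (h : ReflTransGen DescentSwap τ σ) (hPτ : P (RSK τ)) : P (RSK σ) := by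
  induction h using ReflTransGen.head_induction_on with
  | refl => exact hPτ
  | head h _ ih => exact ih (h.perm.trans hτ) (hP _ _ hτ h hPτ)

theorem of_tabRel (hP : DescentSwapClosed n P) {S T : List (List ℕ)} (h : tabRel n S T)
    (hT : P T) : P S := by
  obtain ⟨σ, τ, hσ, hτ, rfl, rfl, hστ⟩ := h
  rw [wordLE_iff_reflTransGen_descentSwap hτ.nodup (hσ.trans hτ.symm)] at hστ
  exact hP.of_reflTransGen hτ hστ hT

theorem of_tabLE (hP : DescentSwapClosed n P) {S T : List (List ℕ)} (h : tabLE n S T)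
    (hT : P T) : P S := by
  induction h using TransGen.head_induction_on with
  | single h => exact hP.of_tabRel h hT
  | head h _ ih => exact hP.of_tabRel h ih

end DescentSwapClosed

-- The principal lower set of `[[1,2,5],[3,6],[4]]` in the weak order on `SYT_6`.
def belowT' : List (List (List ℕ)) :=
  [[[1,2,3,4,5],[6]], [[1,2,3,4,5,6]], [[1,2,3,5],[4,6]], [[1,2,3,5,6],[4]],
   [[1,2,3,6],[4,5]], [[1,2,4,5],[3],[6]], [[1,2,4,5],[3,6]], [[1,2,4,5,6],[3]],
   [[1,2,5],[3,4,6]], [[1,2,5],[3,6],[4]], [[1,2,5,6],[3],[4]], [[1,2,5,6],[3,4]]]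

set_option maxRecDepth 10000 in
theorem descentSwapClosed_belowT' : DescentSwapClosed 6 (· ∈ belowT') := by
  have hcheck : ∀ τ ∈ (range' 1 6).permutations', RSK τ ∈ belowT' →
      ∀ σ ∈ descentSwaps τ, RSK σ ∈ belowT' := by
    decide
  exact fun τ σ hτ h hPτ => hcheck τ (mem_permutations'.2 hτ) hPτ σ h.mem_descentSwaps

/-- The weak order on `SYT_6` is not preserved by the inner
translation map given by the single dual Knuth relation on the triple {3,4,5}:
`S ≤_weak T` for `S` with rows (1,2,4),(3,5,6) and `T` with rows (1,2,4),(3,6),(5),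
but `S' ≰_weak T'` for the translated tableaux `S'` with rows (1,2,3),(4,5,6) and
`T'` with rows (1,2,5),(3,6),(4). -/
theorem weak_order_not_preserved_by_inner_translation :
    tabLE 6 [[1,2,4],[3,5,6]] [[1,2,4],[3,6],[5]] ∧
    ¬ tabLE 6 [[1,2,3],[4,5,6]] [[1,2,5],[3,6],[4]] := by
  constructor
  · have hσ : IsPermWord 6 [3,1,5,2,6,4] := by unfold IsPermWord; decide
    have hτ : IsPermWord 6 [5,3,1,2,6,4] := by unfold IsPermWord; decide
    have hστ : ReflTransGen DescentSwap [5,3,1,2,6,4] [3,1,5,2,6,4] :=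
      .head ⟨[], [1,2,6,4], 3, 5, by decide, rfl, rfl⟩
        (.single ⟨[3], [2,6,4], 1, 5, by decide, rfl, rfl⟩)
    refine .single ⟨_, _, hσ, hτ, by decide, by decide, ?_⟩
    exact (wordLE_iff_reflTransGen_descentSwap hτ.nodup (hσ.trans hτ.symm)).2 hστ
  · exact fun h => absurd (descentSwapClosed_belowT'.of_tabLE h (by decide)) (by decide)
end
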